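/- arXiv:1309.6082 — 2 statements merged into one kernel-verified Lean document; each statement's English description precedes it below -/
import Mathlib

section
/- Additive sewing as a special case: let U be a Banach space and let μ_{ts}(x) = x + A_{ts} where A : {(s,t) : 0 ≤ s ≤ t ≤ T} → U is continuous with A_{ss} = 0 and ‖A_{ts} − A_{us} − A_{tu}‖ ≤ c₁|t−s|^a for some a > 1. Then (μ_{ts}) is a C¹-approximate flow, and the associated flow has the form φ_{ts}(x) = x + I_t − I_s for a unique path I : [0,T] → U with I₀ = 0 and ‖(I_t − I_s) − A_{ts}‖ ≤ c|t−s|^a. -/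
noncomputable section

open Set

variable {U : Type*} [NormedAddCommGroup U] [NormedSpace ℝ U] [CompleteSpace U]

/-- A flow on `U` over the time interval `[0,T]`: `φ t s` is the map from time `s` to time `t`. -/
def IsFlow (T : ℝ) (φ : ℝ → ℝ → U → U) : Prop :=
  (∀ s, 0 ≤ s → s ≤ T → ∀ x, φ s s x = x) ∧
  (∀ s u t, 0 ≤ s → s ≤ u → u ≤ t → t ≤ T → ∀ x, φ t u (φ u s x) = φ t s x)

/-- A `C¹`-approximate flow on `U` with constants `c₁` and `a > 1`:  a family of `C²` maps
`μ t s : U → U`, continuous in `(s,t)` in the uniform topology, with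
`‖μ_{ts} - Id‖_{C²} = o_{t-s}(1)` and `‖μ_{tu} ∘ μ_{us} - μ_{ts}‖_{C¹} ≤ c₁ |t-s|^a`. -/
structure IsC1ApproxFlow (T c₁ a : ℝ) (μ : ℝ → ℝ → U → U) : Prop where
  smooth : ∀ s t, 0 ≤ s → s ≤ t → t ≤ T → ContDiff ℝ 2 (μ t s)
  cont : ∀ s t, 0 ≤ s → s ≤ t → t ≤ T → ∀ ε > (0:ℝ), ∃ η > (0:ℝ), ∀ s' t',
      0 ≤ s' → s' ≤ t' → t' ≤ T → |s' - s| ≤ η → |t' - t| ≤ η →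
      ∀ x, ‖μ t' s' x - μ t s x‖ ≤ ε
  near_id : ∀ ε > (0:ℝ), ∃ η > (0:ℝ), ∀ s t, 0 ≤ s → s ≤ t → t ≤ T → t - s ≤ η → ∀ x,
      ‖μ t s x - x‖ ≤ ε ∧ ‖fderiv ℝ (μ t s) x - ContinuousLinearMap.id ℝ U‖ ≤ ε ∧
      ‖iteratedFDeriv ℝ 2 (μ t s) x‖ ≤ ε
  c₁_pos : 0 < c₁
  a_gt_one : 1 < a
  approx : ∀ s u t, 0 ≤ s → s ≤ u → u ≤ t → t ≤ T → ∀ x,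
      ‖μ t u (μ u s x) - μ t s x‖ ≤ c₁ * (t - s) ^ a ∧
      ‖fderiv ℝ (fun z => μ t u (μ u s z)) x - fderiv ℝ (μ t s) x‖ ≤ c₁ * (t - s) ^ a

/-- `φ` is at uniform distance at most `c |t-s|^a` from `μ`, for `t - s ≤ δ`. -/
def Close (T a c δ : ℝ) (φ μ : ℝ → ℝ → U → U) : Prop :=
  ∀ s t, 0 ≤ s → s ≤ t → t ≤ T → t - s ≤ δ →
    ∀ x, ‖φ t s x - μ t s x‖ ≤ c * (t - s) ^ a

/-- Composition of the maps `μ` along the partition `s = σ 0 < σ 1 < ⋯ < σ n = t`. -/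
def compAlong (μ : ℝ → ℝ → U → U) (σ : ℕ → ℝ) : ℕ → U → U
  | 0 => fun x => x
  | n + 1 => fun x => μ (σ (n + 1)) (σ n) (compAlong μ σ n x)

/-!
The maps `μ_{ts} = Id + A_{ts}` are translations, so their derivatives are those of the
identity and the `C¹`-approximate flow estimates reduce to the bound on the defect
`δA_{sut} = A_{ts} - A_{us} - A_{tu}`.

The path `I` is the limit of the Riemann sums of `A` over the dyadic grids of `[0, T]`, each
closed at `t` by the partial cell ending at `t`. Halving the mesh `h` changes such a sum by minus
the midpoint defects of the cells below `t`, each `O(h^a)`, up to one `O(h^a)` error from the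
partial cell; so an increment `I_t - I_s` moves by `O((t - s + h) h^(a-1))` from one grid to the
next. Starting from a grid of mesh `h ≍ t - s`, where at most one grid point separates `s` and
`t`, and summing this geometric series gives `‖I_t - I_s - A_{ts}‖ = O(|t - s|^a)`. Two such
paths differ by a path with increments `O(|t - s|^a)`, `a > 1`, which is constant.
-/

open Filter Topology

theorem Finset.sum_range_two_mul {M : Type*} [AddCommMonoid M] (f : ℕ → M) (k : ℕ) :
    ∑ i ∈ Finset.range (2 * k), f i = ∑ j ∈ Finset.range k, (f (2 * j) + f (2 * j + 1)) := by
  induction k with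
  | zero => simp
  | succ k ih =>
    rw [Nat.mul_succ, Finset.sum_range_succ, Finset.sum_range_succ, Finset.sum_range_succ, ih,
      add_assoc]

theorem Nat.floor_two_mul_eq {x : ℝ} (hx : 0 ≤ x) :
    ⌊2 * x⌋₊ = 2 * ⌊x⌋₊ ∨ ⌊2 * x⌋₊ = 2 * ⌊x⌋₊ + 1 := by
  have hle : 2 * ⌊x⌋₊ ≤ ⌊2 * x⌋₊ := by
    apply Nat.le_floor
    push_cast
    linarith [Nat.floor_le hx]
  have hlt : ⌊2 * x⌋₊ < 2 * ⌊x⌋₊ + 2 := by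
    rw [Nat.floor_lt (by positivity)]
    push_cast
    linarith [Nat.lt_floor_add_one x]
  omega

theorem Nat.floor_div_mul_le {t h : ℝ} (ht : 0 ≤ t) (hh : 0 < h) : ⌊t / h⌋₊ * h ≤ t :=
  (le_div_iff₀ hh).mp (Nat.floor_le (by positivity))

theorem Nat.lt_floor_div_add_one_mul (t : ℝ) {h : ℝ} (hh : 0 < h) : t < (⌊t / h⌋₊ + 1) * h :=
  (div_lt_iff₀ hh).mp (Nat.lt_floor_add_one _)

theorem exists_dyadic_scale {d T : ℝ} (hd : 0 < d) (hdT : d ≤ T) :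
    ∃ n : ℕ, d ≤ T / 2 ^ n ∧ T / 2 ^ n ≤ 2 * d := by
  obtain ⟨n, hlow, hupp⟩ := exists_nat_pow_near ((one_le_div hd).mpr hdT) one_lt_two
  refine ⟨n, ?_, ?_⟩
  · rw [le_div_iff₀ (by positivity), mul_comm]
    exact (le_div_iff₀ hd).mp hlow
  · rw [div_le_iff₀ (by positivity)]
    have := (div_lt_iff₀ hd).mp hupp
    rw [pow_succ] at this
    linarith

theorem div_two_pow_rpow {H : ℝ} (hH : 0 ≤ H) (b : ℝ) (m : ℕ) :
    (H / 2 ^ m) ^ b = H ^ b * ((2 : ℝ) ^ (-b)) ^ m := by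
  rw [Real.div_rpow hH (by positivity), ← Real.rpow_pow_comm zero_le_two,
    Real.rpow_neg zero_le_two, inv_pow, div_eq_mul_inv]

theorem eq_zero_of_norm_sub_le_rpow {E : Type*} [NormedAddCommGroup E] {F : ℝ → E} {T C a : ℝ}
    (ha : 1 < a) (hF0 : F 0 = 0)
    (hF : ∀ s t, 0 ≤ s → s ≤ t → t ≤ T → ‖F t - F s‖ ≤ C * (t - s) ^ a) {t : ℝ}
    (ht : t ∈ Icc 0 T) : F t = 0 := by
  obtain ⟨ht0, htT⟩ := ht
  -- cut `[0, t]` into `n` equal pieces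
  have hsplit : ∀ n : ℕ, 0 < n → ‖F t‖ ≤ C * t * (t / n) ^ (a - 1) := by
    intro n hn
    have hnR : (0 : ℝ) < n := Nat.cast_pos.mpr hn
    have hpiece : ∀ k : ℕ, (↑(k + 1) : ℝ) * (t / n) - k * (t / n) = t / n := fun k => by
      push_cast; ring
    have htel : ∑ k ∈ Finset.range n, (F (↑(k + 1) * (t / n)) - F (k * (t / n))) = F t := by
      rw [Finset.sum_range_sub (fun k : ℕ => F (k * (t / n))), Nat.cast_zero, zero_mul, hF0,
        sub_zero, mul_div_cancel₀ _ hnR.ne']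
    have hpow : (t / n) ^ a = (t / n) ^ (a - 1) * (t / n) := by
      rw [← Real.rpow_add_one' (by positivity) (by linarith), sub_add_cancel]
    calc ‖F t‖ ≤ ∑ k ∈ Finset.range n, C * (t / n) ^ a := by
          rw [← htel]
          refine norm_sum_le_of_le _ fun k hk => ?_
          have hk : (↑(k + 1) : ℝ) ≤ n := by exact_mod_cast Finset.mem_range.mp hk
          have hkT : (↑(k + 1) : ℝ) * (t / n) ≤ T := by
            calc _ ≤ (n : ℝ) * (t / n) := by gcongr
              _ ≤ T := by rwa [mul_div_cancel₀ _ hnR.ne']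
          have h := hF (k * (t / n)) _ (by positivity) (by gcongr; simp) hkT
          rwa [hpiece] at h
      _ = C * t * (t / n) ^ (a - 1) := by
          rw [Finset.sum_const, Finset.card_range, nsmul_eq_mul, hpow]
          field_simp
  have hlim : Tendsto (fun n : ℕ => C * t * (t / n) ^ (a - 1)) atTop (𝓝 0) := by
    have h := ((tendsto_const_div_atTop_nhds_zero_nat t).rpow_const
      (Or.inr (by linarith : (0 : ℝ) ≤ a - 1))).const_mul (C * t)
    rwa [Real.zero_rpow (by linarith), mul_zero] at h
  exact norm_le_zero_iff.mp <| ge_of_tendsto hlim <|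
    (eventually_gt_atTop 0).mono hsplit

theorem isCompact_triangle (T : ℝ) :
    IsCompact {q : ℝ × ℝ | 0 ≤ q.1 ∧ q.1 ≤ q.2 ∧ q.2 ≤ T} :=
  (isCompact_Icc.prod isCompact_Icc).of_isClosed_subset
    ((isClosed_le continuous_const continuous_fst).inter
      ((isClosed_le continuous_fst continuous_snd).inter
        (isClosed_le continuous_snd continuous_const)))
    fun _ ⟨h1, h2, h3⟩ => ⟨⟨h1, h2.trans h3⟩, ⟨h1.trans h2, h3⟩⟩

namespace Sewing

variable {E : Type*} [NormedAddCommGroup E]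

def defect (A : ℝ → ℝ → E) (s u t : ℝ) : E := A t s - A u s - A t u

theorem eq_zero_of_norm_defect_le {T c₁ a : ℝ} {A : ℝ → ℝ → E} (ha : 0 < a)
    (hA : ∀ s u t, 0 ≤ s → s ≤ u → u ≤ t → t ≤ T → ‖defect A s u t‖ ≤ c₁ * (t - s) ^ a)
    {s : ℝ} (hs : 0 ≤ s) (hsT : s ≤ T) : A s s = 0 := by
  have h := hA s s s hs le_rfl le_rfl hsT
  rwa [sub_self, Real.zero_rpow ha.ne', mul_zero, defect, sub_self, zero_sub, norm_neg,
    norm_le_zero_iff] at h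

def gridSum (A : ℝ → ℝ → E) (h t : ℝ) : E :=
  (∑ j ∈ Finset.range ⌊t / h⌋₊, A (↑(j + 1) * h) (↑j * h)) + A t (⌊t / h⌋₊ * h)

def cellDefect (A : ℝ → ℝ → E) (h : ℝ) (j : ℕ) : E :=
  defect A (j * h) (↑(2 * j + 1) * (h / 2)) (↑(j + 1) * h)

theorem sum_halfGrid_cells (A : ℝ → ℝ → E) (h : ℝ) (k : ℕ) :
    ∑ i ∈ Finset.range (2 * k), A (↑(i + 1) * (h / 2)) (↑i * (h / 2)) =
      ∑ j ∈ Finset.range k, (A (↑(j + 1) * h) (↑j * h) - cellDefect A h j) := by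
  rw [Finset.sum_range_two_mul]
  refine Finset.sum_congr rfl fun j _ => ?_
  have hleft : ((2 * j : ℕ) : ℝ) * (h / 2) = j * h := by push_cast; ring
  have hright : ((2 * j + 1 + 1 : ℕ) : ℝ) * (h / 2) = ↑(j + 1) * h := by push_cast; ring
  rw [hleft, hright, cellDefect, defect]
  abel

section

variable {T c₁ a h : ℝ} {A : ℝ → ℝ → E}
  (hA : ∀ s u t, 0 ≤ s → s ≤ u → u ≤ t → t ≤ T → ‖defect A s u t‖ ≤ c₁ * (t - s) ^ a)
include hA

theorem norm_cellDefect_le (hh : 0 < h) {j : ℕ} (hj : ↑(j + 1) * h ≤ T) :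
    ‖cellDefect A h j‖ ≤ c₁ * h ^ a := by
  have hcell : (↑(j + 1) : ℝ) * h - j * h = h := by push_cast; ring
  have hbound := hA (j * h) (↑(2 * j + 1) * (h / 2)) (↑(j + 1) * h) (by positivity)
    (by push_cast; nlinarith) (by push_cast; nlinarith) hj
  rwa [hcell] at hbound

theorem norm_gridSum_half_sub_le (hc₁ : 0 ≤ c₁) (ha : 0 ≤ a) (hh : 0 < h) {t : ℝ} (ht : 0 ≤ t)
    (htT : t ≤ T) :
    ‖gridSum A (h / 2) t - gridSum A h t + ∑ j ∈ Finset.range ⌊t / h⌋₊, cellDefect A h j‖ ≤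
      c₁ * h ^ a := by
  set k := ⌊t / h⌋₊
  have hfloor : t / (h / 2) = 2 * (t / h) := by field_simp
  have hk : (k : ℝ) * h ≤ t := Nat.floor_div_mul_le ht hh
  have hmid : ((2 * k : ℕ) : ℝ) * (h / 2) = k * h := by push_cast; ring
  rcases Nat.floor_two_mul_eq (div_nonneg ht hh.le) with hK | hK
  · have hzero : gridSum A (h / 2) t - gridSum A h t +
        ∑ j ∈ Finset.range k, cellDefect A h j = 0 := by
      rw [gridSum, gridSum, hfloor, hK, sum_halfGrid_cells, hmid, Finset.sum_sub_distrib]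
      abel
    rw [hzero, norm_zero]
    positivity
  · -- only the last coarse cell is cut at its midpoint `m`
    set m : ℝ := ↑(2 * k + 1) * (h / 2)
    have hsplit : gridSum A (h / 2) t - gridSum A h t + ∑ j ∈ Finset.range k, cellDefect A h j =
        -defect A (k * h) m t := by
      rw [gridSum, gridSum, hfloor, hK, Finset.sum_range_succ, sum_halfGrid_cells, hmid,
        Finset.sum_sub_distrib, defect]
      abel
    have hkm : (k : ℝ) * h ≤ m := by simp only [m]; push_cast; nlinarith
    have hmt : m ≤ t := by
      have hfine := Nat.floor_div_mul_le ht (half_pos hh)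
      rwa [hfloor, hK] at hfine
    have hth : t - k * h ≤ h := by linarith [Nat.lt_floor_div_add_one_mul t hh]
    rw [hsplit, norm_neg]
    calc _ ≤ c₁ * (t - k * h) ^ a := hA _ _ _ (by positivity) hkm hmt htT
      _ ≤ c₁ * h ^ a := by gcongr

theorem norm_gridSum_half_increment_le (hc₁ : 0 ≤ c₁) (ha : 0 ≤ a) (hh : 0 < h) {s t : ℝ}
    (hs : 0 ≤ s) (hst : s ≤ t) (htT : t ≤ T) :
    ‖(gridSum A (h / 2) t - gridSum A (h / 2) s) - (gridSum A h t - gridSum A h s)‖ ≤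
      c₁ * (t - s + 3 * h) * h ^ (a - 1) := by
  have ht : 0 ≤ t := hs.trans hst
  have hks : ⌊s / h⌋₊ ≤ ⌊t / h⌋₊ := Nat.floor_le_floor (by gcongr)
  have hsplit : (gridSum A (h / 2) t - gridSum A (h / 2) s) - (gridSum A h t - gridSum A h s) =
      (gridSum A (h / 2) t - gridSum A h t + ∑ j ∈ Finset.range ⌊t / h⌋₊, cellDefect A h j) -
      (gridSum A (h / 2) s - gridSum A h s + ∑ j ∈ Finset.range ⌊s / h⌋₊, cellDefect A h j) -
      ∑ j ∈ Finset.Ico ⌊s / h⌋₊ ⌊t / h⌋₊, cellDefect A h j := by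
    rw [Finset.sum_Ico_eq_sub _ hks]
    abel
  have hcells : ‖∑ j ∈ Finset.Ico ⌊s / h⌋₊ ⌊t / h⌋₊, cellDefect A h j‖ ≤
      ((⌊t / h⌋₊ - ⌊s / h⌋₊ : ℕ) : ℝ) * (c₁ * h ^ a) := by
    refine (norm_sum_le _ _).trans ?_
    rw [← Nat.card_Ico, ← nsmul_eq_mul]
    refine Finset.sum_le_card_nsmul _ _ _ fun j hj => norm_cellDefect_le hA hh ?_
    have hj : ((j + 1 : ℕ) : ℝ) ≤ ⌊t / h⌋₊ := by exact_mod_cast (Finset.mem_Ico.mp hj).2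
    nlinarith [Nat.floor_div_mul_le ht hh]
  have hcount : ((⌊t / h⌋₊ - ⌊s / h⌋₊ : ℕ) : ℝ) * h ≤ t - s + h := by
    rw [Nat.cast_sub hks]
    linarith [Nat.floor_div_mul_le ht hh, Nat.lt_floor_div_add_one_mul s hh]
  have hpow : h ^ a = h ^ (a - 1) * h := by rw [Real.rpow_sub_one hh.ne']; field_simp
  rw [hsplit]
  calc _ ≤ c₁ * h ^ a + c₁ * h ^ a + ((⌊t / h⌋₊ - ⌊s / h⌋₊ : ℕ) : ℝ) * (c₁ * h ^ a) := by
        refine (norm_sub_le _ _).trans (add_le_add ((norm_sub_le _ _).trans (add_le_add ?_ ?_))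
          hcells)
        · exact norm_gridSum_half_sub_le hA hc₁ ha hh ht htT
        · exact norm_gridSum_half_sub_le hA hc₁ ha hh hs (hst.trans htT)
    _ = c₁ * h ^ (a - 1) * (((⌊t / h⌋₊ - ⌊s / h⌋₊ : ℕ) : ℝ) * h + 2 * h) := by rw [hpow]; ring
    _ ≤ c₁ * h ^ (a - 1) * (t - s + h + 2 * h) := by gcongr
    _ = c₁ * (t - s + 3 * h) * h ^ (a - 1) := by ring

theorem norm_gridSum_sub_sub_le (hc₁ : 0 ≤ c₁) (ha : 0 ≤ a) (hh : 0 < h) {s t : ℝ}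
    (hs : 0 ≤ s) (hst : s ≤ t) (htT : t ≤ T) (hts : t - s ≤ h) :
    ‖(gridSum A h t - gridSum A h s) - A t s‖ ≤ 2 * c₁ * h ^ a := by
  set k := ⌊s / h⌋₊
  have hk : (k : ℝ) * h ≤ s := Nat.floor_div_mul_le hs hh
  have hkt : ⌊t / h⌋₊ = k ∨ ⌊t / h⌋₊ = k + 1 := by
    have hle : ⌊t / h⌋₊ ≤ k + 1 := by
      rw [← Nat.floor_add_one (div_nonneg hs hh.le)]
      exact Nat.floor_le_floor (by rw [div_add_one hh.ne']; gcongr; linarith)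
    have hge : k ≤ ⌊t / h⌋₊ := Nat.floor_le_floor (by gcongr)
    omega
  rcases hkt with hkt | hkt
  · have hdef : (gridSum A h t - gridSum A h s) - A t s = defect A (k * h) s t := by
      rw [gridSum, gridSum, hkt, defect]
      abel
    have htk : t - k * h ≤ h := by linarith [hkt ▸ Nat.lt_floor_div_add_one_mul t hh]
    rw [hdef]
    calc _ ≤ c₁ * (t - k * h) ^ a := hA _ _ _ (by positivity) hk hst htT
      _ ≤ c₁ * h ^ a := by gcongr; linarith
      _ ≤ 2 * c₁ * h ^ a := by nlinarith [Real.rpow_nonneg hh.le a]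
  · -- exactly one grid point `g` lies in `(s, t]`
    set g : ℝ := ↑(k + 1) * h
    have hdef : (gridSum A h t - gridSum A h s) - A t s =
        defect A (k * h) s g - defect A s g t := by
      rw [gridSum, gridSum, hkt, Finset.sum_range_succ, defect, defect]
      abel
    have hsg : s ≤ g := by simp only [g]; push_cast; linarith [Nat.lt_floor_div_add_one_mul s hh]
    have hgt : g ≤ t := by simpa only [g, ← hkt] using Nat.floor_div_mul_le (hs.trans hst) hh
    have hgk : g - k * h = h := by simp only [g]; push_cast; ring
    rw [hdef]
    calc _ ≤ c₁ * (g - k * h) ^ a + c₁ * (t - s) ^ a :=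
          (norm_sub_le _ _).trans (add_le_add (hA _ _ _ (by positivity) hk hsg (hgt.trans htT))
            (hA _ _ _ hs hsg hgt htT))
      _ ≤ c₁ * h ^ a + c₁ * h ^ a := by rw [hgk]; gcongr
      _ = 2 * c₁ * h ^ a := by ring

theorem dist_gridSum_dyadic_le (hc₁ : 0 ≤ c₁) (ha : 0 ≤ a) {H s t : ℝ} (hH : 0 < H)
    (hs : 0 ≤ s) (hst : s ≤ t) (htT : t ≤ T) (hts : t - s ≤ H) (m : ℕ) :
    dist (gridSum A (H / 2 ^ m) t - gridSum A (H / 2 ^ m) s)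
        (gridSum A (H / 2 ^ (m + 1)) t - gridSum A (H / 2 ^ (m + 1)) s) ≤
      4 * c₁ * H ^ a * ((2 : ℝ) ^ (1 - a)) ^ m := by
  have hh : 0 < H / 2 ^ m := by positivity
  have hhH : H / 2 ^ m ≤ H := div_le_self hH.le (one_le_pow₀ one_le_two)
  rw [dist_comm, dist_eq_norm, pow_succ, ← div_div]
  calc _ ≤ c₁ * (t - s + 3 * (H / 2 ^ m)) * (H / 2 ^ m) ^ (a - 1) :=
        norm_gridSum_half_increment_le hA hc₁ ha hh hs hst htT
    _ ≤ c₁ * (4 * H) * (H / 2 ^ m) ^ (a - 1) := by gcongr; linarith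
    _ = 4 * c₁ * H ^ a * ((2 : ℝ) ^ (1 - a)) ^ m := by
        rw [div_two_pow_rpow hH.le, neg_sub, Real.rpow_sub_one hH.ne']
        field_simp

end

def sewnPath (A : ℝ → ℝ → E) (T t : ℝ) : E :=
  limUnder atTop fun n : ℕ => gridSum A (T / 2 ^ n) t - gridSum A (T / 2 ^ n) 0

theorem sewnPath_zero (A : ℝ → ℝ → E) (T : ℝ) : sewnPath A T 0 = 0 := by
  simp only [sewnPath, sub_self]
  exact tendsto_const_nhds.limUnder_eq

variable [CompleteSpace E] {T c₁ a : ℝ} {A : ℝ → ℝ → E}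
  (hA : ∀ s u t, 0 ≤ s → s ≤ u → u ≤ t → t ≤ T → ‖defect A s u t‖ ≤ c₁ * (t - s) ^ a)
include hA

theorem tendsto_sewnPath (hT : 0 < T) (hc₁ : 0 ≤ c₁) (ha : 1 < a) {t : ℝ} (ht : 0 ≤ t)
    (htT : t ≤ T) :
    Tendsto (fun n : ℕ => gridSum A (T / 2 ^ n) t - gridSum A (T / 2 ^ n) 0) atTop
      (𝓝 (sewnPath A T t)) :=
  (cauchySeq_of_le_geometric _ _ (Real.rpow_lt_one_of_one_lt_of_neg one_lt_two (by linarith))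
    (dist_gridSum_dyadic_le hA hc₁ (by linarith) hT le_rfl ht htT (by linarith))).tendsto_limUnder

theorem norm_sewnPath_sub_sub_le (hT : 0 < T) (hc₁ : 0 ≤ c₁) (ha : 1 < a) {s t : ℝ}
    (hs : 0 ≤ s) (hst : s ≤ t) (htT : t ≤ T) :
    ‖(sewnPath A T t - sewnPath A T s) - A t s‖ ≤
      2 ^ a * (2 + 4 / (1 - 2 ^ (1 - a))) * c₁ * (t - s) ^ a := by
  have hr : (2 : ℝ) ^ (1 - a) < 1 := Real.rpow_lt_one_of_one_lt_of_neg one_lt_two (by linarith)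
  rcases hst.eq_or_lt with rfl | hlt
  · rw [sub_self, zero_sub, norm_neg, eq_zero_of_norm_defect_le (by linarith) hA hs htT,
      norm_zero]
    positivity
  obtain ⟨n, hn, hn'⟩ := exists_dyadic_scale (T := T) (sub_pos.mpr hlt) (by linarith)
  set H := T / 2 ^ n
  have hH : 0 < H := by positivity
  have hshift : ∀ m : ℕ, T / 2 ^ (m + n) = H / 2 ^ m := fun m => by
    rw [pow_add, mul_comm, ← div_div]
  have hlim : Tendsto (fun m : ℕ => (gridSum A (H / 2 ^ m) t - gridSum A (H / 2 ^ m) s) - A t s)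
      atTop (𝓝 ((sewnPath A T t - sewnPath A T s) - A t s)) := by
    have hseq := ((tendsto_sewnPath hA hT hc₁ ha (hs.trans hst) htT).sub
      (tendsto_sewnPath hA hT hc₁ ha hs (hst.trans htT))).comp (tendsto_add_atTop_nat n)
    refine (hseq.sub_const (A t s)).congr fun m => ?_
    simp only [Function.comp_apply, hshift, sub_sub_sub_cancel_right]
  have hstart :
      ‖(gridSum A (H / 2 ^ 0) t - gridSum A (H / 2 ^ 0) s) - A t s‖ ≤ 2 * c₁ * H ^ a := by
    rw [pow_zero, div_one]
    exact norm_gridSum_sub_sub_le hA hc₁ (by linarith) hH hs hst htT hn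
  have hrest := dist_le_of_le_geometric_of_tendsto₀ _ _ hr (fun m => by
    rw [dist_sub_right]
    exact dist_gridSum_dyadic_le hA hc₁ (by linarith) hH hs hst htT hn m) hlim
  have hHa : H ^ a ≤ 2 ^ a * (t - s) ^ a := by
    rw [← Real.mul_rpow zero_le_two (by linarith)]
    gcongr
  calc _ ≤ 2 * c₁ * H ^ a + 4 * c₁ * H ^ a / (1 - 2 ^ (1 - a)) := by
        refine (norm_le_norm_add_norm_sub' _ _).trans (add_le_add hstart ?_)
        rwa [← dist_eq_norm, dist_comm]
    _ = (2 + 4 / (1 - 2 ^ (1 - a))) * c₁ * H ^ a := by ring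
    _ ≤ (2 + 4 / (1 - 2 ^ (1 - a))) * c₁ * (2 ^ a * (t - s) ^ a) := by
        have : 0 < 1 - (2 : ℝ) ^ (1 - a) := by linarith
        gcongr
    _ = 2 ^ a * (2 + 4 / (1 - 2 ^ (1 - a))) * c₁ * (t - s) ^ a := by ring

end Sewing

open Sewing

section Translation

variable {E : Type*} [NormedAddCommGroup E] [NormedSpace ℝ E]

theorem fderiv_add_const_eq_id (c x : E) :
    fderiv ℝ (fun y : E => y + c) x = ContinuousLinearMap.id ℝ E := by
  rw [fderiv_add_const, fderiv_fun_id]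

theorem iteratedFDeriv_two_add_const (c x : E) :
    iteratedFDeriv ℝ 2 (fun y : E => y + c) x = 0 := by
  rw [iteratedFDeriv_succ_eq_comp_right]
  simp only [fderiv_add_const_eq_id, iteratedFDeriv_const_of_ne one_ne_zero]
  simp

theorem isC1ApproxFlow_translate {T c₁ a : ℝ} {A : ℝ → ℝ → E} (hc₁ : 0 < c₁) (ha : 1 < a)
    (hAcont : ContinuousOn (fun q : ℝ × ℝ => A q.2 q.1)
      {q : ℝ × ℝ | 0 ≤ q.1 ∧ q.1 ≤ q.2 ∧ q.2 ≤ T})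
    (hA : ∀ s u t, 0 ≤ s → s ≤ u → u ≤ t → t ≤ T → ‖defect A s u t‖ ≤ c₁ * (t - s) ^ a) :
    IsC1ApproxFlow T c₁ a (fun t s (x : E) => x + A t s) where
  smooth _ _ _ _ _ := contDiff_id.add contDiff_const
  cont s t hs hst htT ε hε := by
    obtain ⟨η, hη, hclose⟩ := Metric.continuousWithinAt_iff.mp
      (hAcont (s, t) ⟨hs, hst, htT⟩) ε hε
    refine ⟨η / 2, half_pos hη, fun s' t' hs' hst' htT' hss' htt' x => ?_⟩
    have hdist : dist (s', t') (s, t) < η := by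
      rw [Prod.dist_eq, Real.dist_eq, Real.dist_eq]
      exact max_lt (by linarith) (by linarith)
    rw [add_sub_add_left_eq_sub, ← dist_eq_norm]
    exact (hclose ⟨hs', hst', htT'⟩ hdist).le
  near_id ε hε := by
    -- uniform continuity on the compact triangle, and `A s s = 0`
    obtain ⟨η, hη, hclose⟩ := Metric.uniformContinuousOn_iff_le.mp
      ((isCompact_triangle T).uniformContinuousOn_of_continuous hAcont) ε hε
    refine ⟨η, hη, fun s t hs hst htT hts x => ⟨?_, ?_, ?_⟩⟩
    · have hdist : dist (s, t) (s, s) ≤ η := by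
        rw [Prod.dist_eq, Real.dist_eq, Real.dist_eq, sub_self, abs_zero,
          abs_of_nonneg (sub_nonneg.mpr hst)]
        exact max_le hη.le hts
      have h := hclose (s, t) ⟨hs, hst, htT⟩ (s, s) ⟨hs, le_rfl, hst.trans htT⟩ hdist
      rwa [dist_eq_norm, eq_zero_of_norm_defect_le (by linarith) hA hs (hst.trans htT), sub_zero,
        ← add_sub_cancel_left x (A t s)] at h
    · rw [fderiv_add_const_eq_id, sub_self, norm_zero]
      exact hε.le
    · rw [iteratedFDeriv_two_add_const, norm_zero]
      exact hε.le
  c₁_pos := hc₁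
  a_gt_one := ha
  approx s u t hs hsu hut htT x := by
    refine ⟨?_, ?_⟩
    · rw [add_assoc, add_sub_add_left_eq_sub, ← neg_sub, norm_neg,
        show A t s - (A u s + A t u) = defect A s u t by rw [defect, sub_sub]]
      exact hA s u t hs hsu hut htT
    · simp only [add_assoc, fderiv_add_const_eq_id, sub_self, norm_zero]
      exact mul_nonneg hc₁.le (Real.rpow_nonneg (by linarith) a)

end Translation

theorem additive_sewing_general
    {T c₁ a : ℝ} (hT : 0 < T) (hc₁ : 0 < c₁) (ha : 1 < a)
    (A : ℝ → ℝ → U)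
    (hAcont : ContinuousOn (fun q : ℝ × ℝ => A q.2 q.1)
      {q : ℝ × ℝ | 0 ≤ q.1 ∧ q.1 ≤ q.2 ∧ q.2 ≤ T})
    (hA : ∀ s u t, 0 ≤ s → s ≤ u → u ≤ t → t ≤ T →
      ‖A t s - A u s - A t u‖ ≤ c₁ * (t - s) ^ a) :
    IsC1ApproxFlow T c₁ a (fun t s (x : U) => x + A t s) ∧
    ∃ I : ℝ → U, I 0 = 0 ∧
      IsFlow T (fun t s (x : U) => x + (I t - I s)) ∧
      (∃ c : ℝ, ∀ s t, 0 ≤ s → s ≤ t → t ≤ T →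
        ‖(I t - I s) - A t s‖ ≤ c * (t - s) ^ a) ∧
      ∀ J : ℝ → U, J 0 = 0 →
        (∃ c : ℝ, ∀ s t, 0 ≤ s → s ≤ t → t ≤ T →
          ‖(J t - J s) - A t s‖ ≤ c * (t - s) ^ a) →
        ∀ t ∈ Icc (0:ℝ) T, J t = I t := by
  set I := sewnPath A T
  obtain ⟨K, hI⟩ : ∃ K : ℝ, ∀ s t, 0 ≤ s → s ≤ t → t ≤ T →
      ‖(I t - I s) - A t s‖ ≤ K * (t - s) ^ a :=
    ⟨_, fun s t hs hst htT => norm_sewnPath_sub_sub_le hA hT hc₁.le ha hs hst htT⟩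
  have hflow : IsFlow T (fun t s (x : U) => x + (I t - I s)) :=
    ⟨fun s _ _ x => by simp, fun s u t _ _ _ _ x => by dsimp only; abel⟩
  refine ⟨isC1ApproxFlow_translate hc₁ ha hAcont hA, I, sewnPath_zero A T, hflow, ⟨_, hI⟩,
    fun J hJ0 ⟨c, hJ⟩ t ht => sub_eq_zero.mp ?_⟩
  refine eq_zero_of_norm_sub_le_rpow (F := J - I) (C := c + K) ha
    (by simp [hJ0, I, sewnPath_zero]) (fun s t hs hst htT => ?_) ht
  calc ‖(J - I) t - (J - I) s‖ = ‖((J t - J s) - A t s) - ((I t - I s) - A t s)‖ := by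
        congr 1; simp only [Pi.sub_apply]; abel
    _ ≤ _ := norm_sub_le_of_le (hJ s t hs hst htT) (hI s t hs hst htT)
    _ = _ := by rw [← add_mul]

/-- Additive sewing as a special case: if `A : {0 ≤ s ≤ t ≤ T} → U` is
continuous with `A_{ss} = 0` and `‖A_{ts} - A_{us} - A_{tu}‖ ≤ c₁ |t-s|^a`, `a > 1`, then
`μ_{ts}(x) = x + A_{ts}` is a `C¹`-approximate flow, and the associated flow is
`φ_{ts}(x) = x + I_t - I_s` for a unique path `I` with `I_0 = 0` and
`‖(I_t - I_s) - A_{ts}‖ ≤ c |t-s|^a`. -/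
theorem additive_sewing
    {T c₁ a : ℝ} (hT : 0 < T) (hc₁ : 0 < c₁) (ha : 1 < a)
    (A : ℝ → ℝ → U)
    (hAcont : ContinuousOn (fun q : ℝ × ℝ => A q.2 q.1)
      {q : ℝ × ℝ | 0 ≤ q.1 ∧ q.1 ≤ q.2 ∧ q.2 ≤ T})
    (hAzero : ∀ s, 0 ≤ s → s ≤ T → A s s = 0)
    (hA : ∀ s u t, 0 ≤ s → s ≤ u → u ≤ t → t ≤ T →
      ‖A t s - A u s - A t u‖ ≤ c₁ * (t - s) ^ a) :
    IsC1ApproxFlow T c₁ a (fun t s (x : U) => x + A t s) ∧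
    ∃ I : ℝ → U, I 0 = 0 ∧
      IsFlow T (fun t s (x : U) => x + (I t - I s)) ∧
      (∃ c : ℝ, ∀ s t, 0 ≤ s → s ≤ t → t ≤ T →
        ‖(I t - I s) - A t s‖ ≤ c * (t - s) ^ a) ∧
      ∀ J : ℝ → U, J 0 = 0 →
        (∃ c : ℝ, ∀ s t, 0 ≤ s → s ≤ t → t ≤ T →
          ‖(J t - J s) - A t s‖ ≤ c * (t - s) ^ a) →
        ∀ t ∈ Icc (0:ℝ) T, J t = I t :=
  additive_sewing_general hT hc₁ ha A hAcont hA
end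
end

section
/- Uniqueness in the flow construction: if μ is a C¹-approximate flow with constants c₁, a > 1, and φ, ψ are two flows on U such that ‖φ_{ts} − μ_{ts}‖_∞ ≤ c|t−s|^a and ‖ψ_{ts} − μ_{ts}‖_∞ ≤ c'|t−s|^a for all t−s ≤ δ, then φ = ψ on all of {(s,t) : 0 ≤ s ≤ t ≤ T}. -/
noncomputable section

open Set

variable {U : Type*} [NormedAddCommGroup U] [NormedSpace ℝ U] [CompleteSpace U]

/-!
Compare both flows with the compositions of `μ` along dyadic partitions. On intervals of length
at most a small `δ₀`, the `C¹`-approximate flow property shows by induction on the depth `k`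
that these compositions stay `C¹`-close to `μ`, hence are Lipschitz with a constant `L`
independent of `k` and only slightly above `1`. Splitting `[s, t]` at its midpoint and using the
flow property, the distance from a flow to the depth-`k` composition is then at most
`c (t - s)^a ((1 + L) / 2^a)^k`, which tends to `0` because `1 + L < 2^a`. So both flows agree on
short intervals, and by the flow property everywhere.
-/

open Filter Topology

theorem ContinuousLinearMap.norm_comp_sub_comp_le {𝕜 E F G : Type*} [NontriviallyNormedField 𝕜]
    [NormedAddCommGroup E] [NormedSpace 𝕜 E] [NormedAddCommGroup F] [NormedSpace 𝕜 F]
    [NormedAddCommGroup G] [NormedSpace 𝕜 G] (P P' : F →L[𝕜] G) (Q Q' : E →L[𝕜] F) :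
    ‖P.comp Q - P'.comp Q'‖ ≤ ‖P - P'‖ * ‖Q‖ + ‖P'‖ * ‖Q - Q'‖ :=
  calc ‖P.comp Q - P'.comp Q'‖ = ‖(P - P').comp Q + P'.comp (Q - Q')‖ := by
        rw [sub_comp, comp_sub]; abel_nf
    _ ≤ ‖P - P'‖ * ‖Q‖ + ‖P'‖ * ‖Q - Q'‖ :=
        (norm_add_le _ _).trans (add_le_add (opNorm_comp_le _ _) (opNorm_comp_le _ _))

section Calculus

variable {E F : Type*} [NormedAddCommGroup E] [NormedSpace ℝ E]
  [NormedAddCommGroup F] [NormedSpace ℝ F]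

theorem norm_sub_le_of_norm_fderiv_sub_id_le {f : E → E} (hf : Differentiable ℝ f) {r : ℝ}
    (h : ∀ z, ‖fderiv ℝ f z - ContinuousLinearMap.id ℝ E‖ ≤ r) (x y : E) :
    ‖f x - f y‖ ≤ (1 + r) * ‖x - y‖ := by
  have hlin := convex_univ.norm_image_sub_le_of_norm_fderiv_le' (fun z _ => hf z)
    (fun z _ => h z) (mem_univ y) (mem_univ x)
  rw [ContinuousLinearMap.id_apply] at hlin
  calc ‖f x - f y‖ ≤ ‖f x - f y - (x - y)‖ + ‖x - y‖ := norm_le_norm_sub_add _ _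
    _ ≤ (1 + r) * ‖x - y‖ := by linarith

theorem norm_fderiv_sub_le_of_norm_iteratedFDeriv_two_le {f : E → F} (hf : ContDiff ℝ 2 f)
    {r : ℝ} (h : ∀ z, ‖iteratedFDeriv ℝ 2 f z‖ ≤ r) (x y : E) :
    ‖fderiv ℝ f x - fderiv ℝ f y‖ ≤ r * ‖x - y‖ :=
  convex_univ.norm_image_sub_le_of_norm_fderiv_le
    (fun z _ => (hf.fderiv_right (m := 1) le_rfl).differentiable one_ne_zero z)
    (fun z _ => by rw [← norm_iteratedFDeriv_one, norm_iteratedFDeriv_fderiv]; exact h z)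
    (mem_univ y) (mem_univ x)

theorem norm_le_one_add_of_norm_sub_id_le {P : E →L[ℝ] E} {r : ℝ}
    (h : ‖P - ContinuousLinearMap.id ℝ E‖ ≤ r) : ‖P‖ ≤ 1 + r :=
  calc ‖P‖ ≤ ‖P - ContinuousLinearMap.id ℝ E‖ + ‖ContinuousLinearMap.id ℝ E‖ :=
        norm_le_norm_sub_add _ _
    _ ≤ 1 + r := by linarith [ContinuousLinearMap.norm_id_le (𝕜 := ℝ) (E := E)]

theorem norm_fderiv_comp_sub_fderiv_comp_le {A B f g : E → E} {x : E} {ε r : ℝ}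
    (hA : DifferentiableAt ℝ A (B x)) (hB : DifferentiableAt ℝ B x) (hf : ContDiff ℝ 2 f)
    (hg : DifferentiableAt ℝ g x)
    (hDf : ∀ z, ‖fderiv ℝ f z - ContinuousLinearMap.id ℝ E‖ ≤ ε)
    (hD2f : ∀ z, ‖iteratedFDeriv ℝ 2 f z‖ ≤ ε)
    (hDg : ‖fderiv ℝ g x - ContinuousLinearMap.id ℝ E‖ ≤ ε) (hε1 : ε ≤ 1) (hrε : r ≤ ε)
    (hB₀ : ‖B x - g x‖ ≤ r) (hA₁ : ‖fderiv ℝ A (B x) - fderiv ℝ f (B x)‖ ≤ r)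
    (hB₁ : ‖fderiv ℝ B x - fderiv ℝ g x‖ ≤ r) :
    ‖fderiv ℝ (A ∘ B) x - fderiv ℝ (f ∘ g) x‖ ≤ (2 + 6 * ε) * r := by
  have hr : 0 ≤ r := (norm_nonneg _).trans hB₀
  have hε : 0 ≤ ε := hr.trans hrε
  have hA₁' : ‖fderiv ℝ A (B x) - fderiv ℝ f (g x)‖ ≤ (1 + ε) * r :=
    calc ‖fderiv ℝ A (B x) - fderiv ℝ f (g x)‖
        ≤ ‖fderiv ℝ A (B x) - fderiv ℝ f (B x)‖ + ‖fderiv ℝ f (B x) - fderiv ℝ f (g x)‖ :=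
          norm_sub_le_norm_sub_add_norm_sub _ _ _
      _ ≤ r + ε * r := by
          gcongr
          exact (norm_fderiv_sub_le_of_norm_iteratedFDeriv_two_le hf hD2f _ _).trans (by gcongr)
      _ = (1 + ε) * r := by ring
  have hDB : ‖fderiv ℝ B x‖ ≤ 1 + 2 * ε := by
    refine norm_le_one_add_of_norm_sub_id_le ?_
    calc ‖fderiv ℝ B x - ContinuousLinearMap.id ℝ E‖
        ≤ ‖fderiv ℝ B x - fderiv ℝ g x‖ + ‖fderiv ℝ g x - ContinuousLinearMap.id ℝ E‖ :=
          norm_sub_le_norm_sub_add_norm_sub _ _ _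
      _ ≤ 2 * ε := by linarith
  have hDf' : ‖fderiv ℝ f (g x)‖ ≤ 1 + ε := norm_le_one_add_of_norm_sub_id_le (hDf _)
  rw [fderiv_comp x hA hB, fderiv_comp x (hf.differentiable two_ne_zero _) hg]
  calc ‖(fderiv ℝ A (B x)).comp (fderiv ℝ B x) - (fderiv ℝ f (g x)).comp (fderiv ℝ g x)‖
      ≤ ‖fderiv ℝ A (B x) - fderiv ℝ f (g x)‖ * ‖fderiv ℝ B x‖
        + ‖fderiv ℝ f (g x)‖ * ‖fderiv ℝ B x - fderiv ℝ g x‖ :=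
        ContinuousLinearMap.norm_comp_sub_comp_le _ _ _ _
    _ ≤ (1 + ε) * r * (1 + 2 * ε) + (1 + ε) * r := by gcongr
    _ ≤ (2 + 6 * ε) * r := by nlinarith [mul_nonneg hr (mul_nonneg hε (sub_nonneg.mpr hε1))]

end Calculus

theorem rpow_midpoint_sub {s t : ℝ} (hst : s ≤ t) (a : ℝ) :
    ((s + t) / 2 - s) ^ a = (t - s) ^ a / 2 ^ a := by
  rw [← Real.div_rpow (by linarith) zero_le_two]; ring_nf

theorem rpow_sub_midpoint {s t : ℝ} (hst : s ≤ t) (a : ℝ) :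
    (t - (s + t) / 2) ^ a = (t - s) ^ a / 2 ^ a := by
  rw [← Real.div_rpow (by linarith) zero_le_two]; ring_nf

structure ShortInterval (T δ s t : ℝ) : Prop where
  nonneg : 0 ≤ s
  le : s ≤ t
  le_bound : t ≤ T
  length_le : t - s ≤ δ

namespace ShortInterval

variable {T δ s t : ℝ}

theorem left_half (h : ShortInterval T δ s t) : ShortInterval T δ s ((s + t) / 2) :=
  ⟨h.nonneg, by linarith [h.le], by linarith [h.le, h.le_bound], by linarith [h.le, h.length_le]⟩

theorem right_half (h : ShortInterval T δ s t) : ShortInterval T δ ((s + t) / 2) t :=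
  ⟨by linarith [h.nonneg, h.le], by linarith [h.le], h.le_bound, by linarith [h.le, h.length_le]⟩

theorem mono {δ' : ℝ} (h : ShortInterval T δ s t) (hδ : δ ≤ δ') : ShortInterval T δ' s t :=
  ⟨h.nonneg, h.le, h.le_bound, h.length_le.trans hδ⟩

theorem rpow_nonneg (h : ShortInterval T δ s t) (a : ℝ) : 0 ≤ (t - s) ^ a :=
  Real.rpow_nonneg (sub_nonneg.mpr h.le) a

theorem mul_rpow_le {a K ε : ℝ} (h : ShortInterval T δ s t) (ha : 0 ≤ a) (hK : 0 ≤ K)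
    (hKδ : K * δ ^ a ≤ ε) : K * (t - s) ^ a ≤ ε :=
  le_trans (by gcongr; exacts [sub_nonneg.mpr h.le, h.length_le]) hKδ

end ShortInterval

/-- The composition `μ_π` along the dyadic partition `π` of `[s, t]` into `2 ^ k` intervals. -/
def dyadicComp {α : Type*} (μ : ℝ → ℝ → α → α) : ℕ → ℝ → ℝ → α → α
  | 0, s, t => μ t s
  | k + 1, s, t => dyadicComp μ k ((s + t) / 2) t ∘ dyadicComp μ k s ((s + t) / 2)

section DyadicEstimates

variable {E : Type*} [NormedAddCommGroup E] [NormedSpace ℝ E] {T c₁ a δ₀ ε K : ℝ}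
  {μ : ℝ → ℝ → E → E}

theorem contDiff_dyadicComp (hμ : IsC1ApproxFlow T c₁ a μ) (k : ℕ) {s t : ℝ}
    (hst : ShortInterval T δ₀ s t) : ContDiff ℝ 2 (dyadicComp μ k s t) := by
  induction k generalizing s t with
  | zero => exact hμ.smooth s t hst.nonneg hst.le hst.le_bound
  | succ k ih => exact (ih hst.right_half).comp (ih hst.left_half)

theorem norm_dyadicComp_sub_le (hμ : IsC1ApproxFlow T c₁ a μ)
    (hDμ : ∀ s t, ShortInterval T δ₀ s t → ∀ x,
      ‖fderiv ℝ (μ t s) x - ContinuousLinearMap.id ℝ E‖ ≤ ε)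
    (hε : 0 ≤ ε) (hK0 : 0 ≤ K) (hK : c₁ + (2 + ε) / 2 ^ a * K ≤ K) (k : ℕ) {s t : ℝ}
    (hst : ShortInterval T δ₀ s t) (x : E) :
    ‖dyadicComp μ k s t x - μ t s x‖ ≤ K * (t - s) ^ a := by
  induction k generalizing s t x with
  | zero => simpa [dyadicComp] using mul_nonneg hK0 (hst.rpow_nonneg a)
  | succ k ih =>
    set m := (s + t) / 2
    set h := (t - s) ^ a / 2 ^ a
    set B := dyadicComp μ k s m
    have hsm : (m - s) ^ a = h := rpow_midpoint_sub hst.le a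
    have htm : (t - m) ^ a = h := rpow_sub_midpoint hst.le a
    have hlip : ‖μ t m (B x) - μ t m (μ m s x)‖ ≤ (1 + ε) * ‖B x - μ m s x‖ :=
      norm_sub_le_of_norm_fderiv_sub_id_le
        ((contDiff_dyadicComp hμ 0 hst.right_half).differentiable two_ne_zero)
        (hDμ m t hst.right_half) _ _
    have happrox := (hμ.approx s m t hst.nonneg hst.left_half.le hst.right_half.le
      hst.le_bound x).1
    calc ‖dyadicComp μ (k + 1) s t x - μ t s x‖
        = ‖dyadicComp μ k m t (B x) - μ t s x‖ := rfl
      _ ≤ ‖dyadicComp μ k m t (B x) - μ t m (B x)‖ + ‖μ t m (B x) - μ t m (μ m s x)‖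
          + ‖μ t m (μ m s x) - μ t s x‖ := by
          simpa only [dist_eq_norm] using
            dist_triangle4 (dyadicComp μ k m t (B x)) (μ t m (B x)) (μ t m (μ m s x)) (μ t s x)
      _ ≤ K * h + (1 + ε) * (K * h) + c₁ * (t - s) ^ a := by
          gcongr
          · exact htm ▸ ih hst.right_half (B x)
          · exact hlip.trans (by gcongr; exact hsm ▸ ih hst.left_half x)
      _ = (c₁ + (2 + ε) / 2 ^ a * K) * (t - s) ^ a := by simp only [h]; ring
      _ ≤ K * (t - s) ^ a := by gcongr; exact hst.rpow_nonneg a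

theorem norm_fderiv_dyadicComp_sub_le (hμ : IsC1ApproxFlow T c₁ a μ)
    (hDμ : ∀ s t, ShortInterval T δ₀ s t → ∀ x,
      ‖fderiv ℝ (μ t s) x - ContinuousLinearMap.id ℝ E‖ ≤ ε)
    (hD2μ : ∀ s t, ShortInterval T δ₀ s t → ∀ x, ‖iteratedFDeriv ℝ 2 (μ t s) x‖ ≤ ε)
    (hε : 0 ≤ ε) (hε1 : ε ≤ 1) (hK0 : 0 ≤ K) (hK : c₁ + (2 + 6 * ε) / 2 ^ a * K ≤ K)
    (hKδ : K * δ₀ ^ a ≤ ε) (k : ℕ) {s t : ℝ} (hst : ShortInterval T δ₀ s t) (x : E) :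
    ‖fderiv ℝ (dyadicComp μ k s t) x - fderiv ℝ (μ t s) x‖ ≤ K * (t - s) ^ a := by
  have ha : 0 ≤ a := by linarith [hμ.a_gt_one]
  have hK₀ : c₁ + (2 + ε) / 2 ^ a * K ≤ K := le_trans (by gcongr; linarith) hK
  induction k generalizing s t x with
  | zero => simpa [dyadicComp] using mul_nonneg hK0 (hst.rpow_nonneg a)
  | succ k ih =>
    set m := (s + t) / 2
    set h := (t - s) ^ a / 2 ^ a
    have hsm : (m - s) ^ a = h := rpow_midpoint_sub hst.le a
    have htm : (t - m) ^ a = h := rpow_sub_midpoint hst.le a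
    have hB₀ : ‖dyadicComp μ k s m x - μ m s x‖ ≤ K * h :=
      hsm ▸ norm_dyadicComp_sub_le hμ hDμ hε hK0 hK₀ k hst.left_half x
    have hstep := norm_fderiv_comp_sub_fderiv_comp_le
      ((contDiff_dyadicComp hμ k hst.right_half).differentiable two_ne_zero _)
      ((contDiff_dyadicComp hμ k hst.left_half).differentiable two_ne_zero x)
      (contDiff_dyadicComp hμ 0 hst.right_half)
      ((contDiff_dyadicComp hμ 0 hst.left_half).differentiable two_ne_zero x)
      (hDμ m t hst.right_half) (hD2μ m t hst.right_half) (hDμ s m hst.left_half x) hε1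
      (hsm ▸ hst.left_half.mul_rpow_le ha hK0 hKδ) hB₀
      (htm ▸ ih hst.right_half _) (hsm ▸ ih hst.left_half x)
    have happrox := (hμ.approx s m t hst.nonneg hst.left_half.le hst.right_half.le
      hst.le_bound x).2
    calc ‖fderiv ℝ (dyadicComp μ (k + 1) s t) x - fderiv ℝ (μ t s) x‖
        ≤ ‖fderiv ℝ (dyadicComp μ k m t ∘ dyadicComp μ k s m) x - fderiv ℝ (μ t m ∘ μ m s) x‖
          + ‖fderiv ℝ (μ t m ∘ μ m s) x - fderiv ℝ (μ t s) x‖ :=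
          norm_sub_le_norm_sub_add_norm_sub _ _ _
      _ ≤ (2 + 6 * ε) * (K * h) + c₁ * (t - s) ^ a := add_le_add hstep happrox
      _ = (c₁ + (2 + 6 * ε) / 2 ^ a * K) * (t - s) ^ a := by simp only [h]; ring
      _ ≤ K * (t - s) ^ a := by gcongr; exact hst.rpow_nonneg a

theorem norm_dyadicComp_sub_dyadicComp_le (hμ : IsC1ApproxFlow T c₁ a μ)
    (hDμ : ∀ s t, ShortInterval T δ₀ s t → ∀ x,
      ‖fderiv ℝ (μ t s) x - ContinuousLinearMap.id ℝ E‖ ≤ ε)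
    (hD2μ : ∀ s t, ShortInterval T δ₀ s t → ∀ x, ‖iteratedFDeriv ℝ 2 (μ t s) x‖ ≤ ε)
    (hε : 0 ≤ ε) (hε1 : ε ≤ 1) (hK0 : 0 ≤ K) (hK : c₁ + (2 + 6 * ε) / 2 ^ a * K ≤ K)
    (hKδ : K * δ₀ ^ a ≤ ε) (k : ℕ) {s t : ℝ} (hst : ShortInterval T δ₀ s t) (x y : E) :
    ‖dyadicComp μ k s t x - dyadicComp μ k s t y‖ ≤ (1 + 2 * ε) * ‖x - y‖ := by
  refine norm_sub_le_of_norm_fderiv_sub_id_le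
    ((contDiff_dyadicComp hμ k hst).differentiable two_ne_zero) (fun z => ?_) x y
  calc ‖fderiv ℝ (dyadicComp μ k s t) z - ContinuousLinearMap.id ℝ E‖
      ≤ ‖fderiv ℝ (dyadicComp μ k s t) z - fderiv ℝ (μ t s) z‖
        + ‖fderiv ℝ (μ t s) z - ContinuousLinearMap.id ℝ E‖ :=
        norm_sub_le_norm_sub_add_norm_sub _ _ _
    _ ≤ 2 * ε := by
        linarith [norm_fderiv_dyadicComp_sub_le hμ hDμ hD2μ hε hε1 hK0 hK hKδ k hst z,
          hst.mul_rpow_le (by linarith [hμ.a_gt_one]) hK0 hKδ, hDμ s t hst z]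

end DyadicEstimates

theorem exists_pos_le_mul_rpow_le {η ε a : ℝ} (hη : 0 < η) (hε : 0 < ε) (ha : 0 < a) (K : ℝ) :
    ∃ δ, 0 < δ ∧ δ ≤ η ∧ K * δ ^ a ≤ ε := by
  have hlim : Tendsto (fun δ : ℝ => K * δ ^ a) (𝓝[>] 0) (𝓝 0) := by
    have : Tendsto (fun δ : ℝ => K * δ ^ a) (𝓝[>] 0) (𝓝 (K * 0 ^ a)) :=
      ((Real.continuousAt_rpow_const 0 a (Or.inr ha.le)).tendsto.const_mul K).mono_left
        nhdsWithin_le_nhds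
    simpa [Real.zero_rpow ha.ne'] using this
  obtain ⟨δ, ⟨hδ0, hδη⟩, hδ⟩ :=
    Filter.nonempty_of_mem (inter_mem (Ioc_mem_nhdsGT hη) (hlim (Iic_mem_nhds hε)))
  exact ⟨δ, hδ0, hδη, hδ⟩

theorem IsC1ApproxFlow.exists_lipschitz_dyadicComp {E : Type*} [NormedAddCommGroup E]
    [NormedSpace ℝ E] {T c₁ a : ℝ} {μ : ℝ → ℝ → E → E} (hμ : IsC1ApproxFlow T c₁ a μ) :
    ∃ δ₀ > 0, ∃ L, 0 ≤ L ∧ 1 + L < 2 ^ a ∧ ∀ k s t, ShortInterval T δ₀ s t → ∀ x y,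
      ‖dyadicComp μ k s t x - dyadicComp μ k s t y‖ ≤ L * ‖x - y‖ := by
  have h2a : 2 < (2 : ℝ) ^ a := by
    simpa using Real.rpow_lt_rpow_of_exponent_lt one_lt_two hμ.a_gt_one
  set ε : ℝ := min 1 ((2 ^ a - 2) / 8)
  have hε : 0 < ε := lt_min one_pos (by linarith)
  have hε1 : ε ≤ 1 := min_le_left _ _
  have hε8 : 8 * ε ≤ 2 ^ a - 2 := by linarith [min_le_right (1 : ℝ) ((2 ^ a - 2) / 8)]
  obtain ⟨η, hη, hnear⟩ := hμ.near_id ε hε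
  -- the fixed point of `K ↦ c₁ + (2 + 6ε) / 2 ^ a * K`
  set K := c₁ * 2 ^ a / (2 ^ a - (2 + 6 * ε))
  have hgap : 0 < 2 ^ a - (2 + 6 * ε) := by linarith
  have hK0 : 0 ≤ K := div_nonneg (by positivity [hμ.c₁_pos]) hgap.le
  have hK : c₁ + (2 + 6 * ε) / 2 ^ a * K ≤ K := le_of_eq (by simp only [K]; field_simp; ring)
  obtain ⟨δ₀, hδ₀, hδ₀η, hKδ₀⟩ :=
    exists_pos_le_mul_rpow_le (a := a) hη hε (by linarith [hμ.a_gt_one]) K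
  have hnear₀ : ∀ s t, ShortInterval T δ₀ s t → ∀ x, _ := fun s t h =>
    hnear s t h.nonneg h.le h.le_bound (h.length_le.trans hδ₀η)
  refine ⟨δ₀, hδ₀, 1 + 2 * ε, by positivity, by linarith, fun k s t hst x y => ?_⟩
  exact norm_dyadicComp_sub_dyadicComp_le hμ (fun s t h x => (hnear₀ s t h x).2.1)
    (fun s t h x => (hnear₀ s t h x).2.2) hε.le hε1 hK0 hK hKδ₀ k hst x y

section Flows

variable {E : Type*} [NormedAddCommGroup E] {T a c δ₀ L : ℝ} {μ : ℝ → ℝ → E → E}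

theorem Close.mono {φ : ℝ → ℝ → E → E} {δ : ℝ} (h : Close T a c δ φ μ) (hδ : δ₀ ≤ δ) :
    Close T a c δ₀ φ μ :=
  fun s t hs hst htT hlen => h s t hs hst htT (hlen.trans hδ)

theorem IsFlow.norm_sub_dyadicComp_le {ρ : ℝ → ℝ → E → E} (hρ : IsFlow T ρ)
    (hclose : Close T a c δ₀ ρ μ) (hL : 0 ≤ L)
    (hlip : ∀ k s t, ShortInterval T δ₀ s t → ∀ x y,
      ‖dyadicComp μ k s t x - dyadicComp μ k s t y‖ ≤ L * ‖x - y‖)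
    (k : ℕ) {s t : ℝ} (hst : ShortInterval T δ₀ s t) (x : E) :
    ‖ρ t s x - dyadicComp μ k s t x‖ ≤ c * (t - s) ^ a * ((1 + L) / 2 ^ a) ^ k := by
  induction k generalizing s t x with
  | zero => simpa [dyadicComp] using hclose s t hst.nonneg hst.le hst.le_bound hst.length_le x
  | succ k ih =>
    set m := (s + t) / 2
    set θ := (1 + L) / 2 ^ a
    have hflow : ρ t m (ρ m s x) = ρ t s x :=
      hρ.2 s m t hst.nonneg hst.left_half.le hst.right_half.le hst.le_bound x
    have hA : ‖ρ t m (ρ m s x) - dyadicComp μ k m t (ρ m s x)‖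
        ≤ c * ((t - s) ^ a / 2 ^ a) * θ ^ k := by
      rw [← rpow_sub_midpoint hst.le]; exact ih hst.right_half _
    have hB : ‖ρ m s x - dyadicComp μ k s m x‖ ≤ c * ((t - s) ^ a / 2 ^ a) * θ ^ k := by
      rw [← rpow_midpoint_sub hst.le]; exact ih hst.left_half x
    calc ‖ρ t s x - dyadicComp μ (k + 1) s t x‖
        = ‖ρ t m (ρ m s x) - dyadicComp μ k m t (dyadicComp μ k s m x)‖ := by rw [hflow]; rfl
      _ ≤ ‖ρ t m (ρ m s x) - dyadicComp μ k m t (ρ m s x)‖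
          + ‖dyadicComp μ k m t (ρ m s x) - dyadicComp μ k m t (dyadicComp μ k s m x)‖ :=
          norm_sub_le_norm_sub_add_norm_sub _ _ _
      _ ≤ c * ((t - s) ^ a / 2 ^ a) * θ ^ k + L * (c * ((t - s) ^ a / 2 ^ a) * θ ^ k) :=
          add_le_add hA ((hlip k m t hst.right_half _ _).trans (by gcongr))
      _ = c * (t - s) ^ a * θ ^ (k + 1) := by simp only [θ]; ring

theorem IsFlow.eq_of_close_of_lipschitz_dyadicComp {c' : ℝ} {φ ψ : ℝ → ℝ → E → E}
    (hφ : IsFlow T φ) (hψ : IsFlow T ψ) (hφc : Close T a c δ₀ φ μ) (hψc : Close T a c' δ₀ ψ μ)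
    (hL : 0 ≤ L) (hLa : 1 + L < 2 ^ a)
    (hlip : ∀ k s t, ShortInterval T δ₀ s t → ∀ x y,
      ‖dyadicComp μ k s t x - dyadicComp μ k s t y‖ ≤ L * ‖x - y‖)
    {s t : ℝ} (hst : ShortInterval T δ₀ s t) (x : E) : φ t s x = ψ t s x := by
  have hθ0 : 0 ≤ (1 + L) / 2 ^ a := by positivity
  have hθ1 : (1 + L) / 2 ^ a < 1 := (div_lt_one (by positivity)).2 hLa
  have hbound (k : ℕ) :
      ‖φ t s x - ψ t s x‖ ≤ (c + c') * (t - s) ^ a * ((1 + L) / 2 ^ a) ^ k := by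
    calc ‖φ t s x - ψ t s x‖
        ≤ ‖φ t s x - dyadicComp μ k s t x‖ + ‖ψ t s x - dyadicComp μ k s t x‖ := by
          rw [norm_sub_rev (ψ t s x)]; exact norm_sub_le_norm_sub_add_norm_sub _ _ _
      _ ≤ c * (t - s) ^ a * ((1 + L) / 2 ^ a) ^ k + c' * (t - s) ^ a * ((1 + L) / 2 ^ a) ^ k :=
          add_le_add (hφ.norm_sub_dyadicComp_le hφc hL hlip k hst x)
            (hψ.norm_sub_dyadicComp_le hψc hL hlip k hst x)
      _ = (c + c') * (t - s) ^ a * ((1 + L) / 2 ^ a) ^ k := by ring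
  have hlim : Tendsto (fun k : ℕ => (c + c') * (t - s) ^ a * ((1 + L) / 2 ^ a) ^ k)
      atTop (𝓝 0) := by
    simpa using (tendsto_pow_atTop_nhds_zero_of_lt_one hθ0 hθ1).const_mul ((c + c') * (t - s) ^ a)
  exact sub_eq_zero.mp (norm_le_zero_iff.mp (ge_of_tendsto' hlim hbound))

end Flows

theorem IsFlow.eq_of_forall_shortInterval {α : Type*} {T δ : ℝ} {φ ψ : ℝ → ℝ → α → α}
    (hφ : IsFlow T φ) (hψ : IsFlow T ψ) (hδ : 0 < δ)
    (h : ∀ s t, ShortInterval T δ s t → ∀ x, φ t s x = ψ t s x)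
    {s t : ℝ} (hs : 0 ≤ s) (hst : s ≤ t) (htT : t ≤ T) (x : α) : φ t s x = ψ t s x := by
  obtain ⟨n, hn⟩ := exists_nat_ge ((t - s) / δ)
  rw [div_le_iff₀ hδ] at hn
  induction n generalizing t x with
  | zero => exact h s t ⟨hs, hst, htT, by push_cast at hn; linarith⟩ x
  | succ n ih =>
    set u := max s (t - δ)
    have hsu : s ≤ u := le_max_left _ _
    have hut : u ≤ t := max_le hst (by linarith)
    have hus : u ≤ s + n * δ :=
      max_le (le_add_of_nonneg_right (by positivity)) (by push_cast at hn; linarith)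
    rw [← hφ.2 s u t hs hsu hut htT, ← hψ.2 s u t hs hsu hut htT,
      ih hsu (hut.trans htT) _ (by linarith),
      h u t ⟨hs.trans hsu, hut, htT, by linarith [le_max_right s (t - δ)]⟩]

theorem flow_unique_general
    {T c₁ a : ℝ} (μ : ℝ → ℝ → U → U)
    (hμ : IsC1ApproxFlow T c₁ a μ)
    (φ ψ : ℝ → ℝ → U → U) (hφ : IsFlow T φ) (hψ : IsFlow T ψ)
    (c δ : ℝ) (hδ : 0 < δ) (hφclose : Close T a c δ φ μ)
    (c' δ' : ℝ) (hδ' : 0 < δ') (hψclose : Close T a c' δ' ψ μ) :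
    ∀ s t, 0 ≤ s → s ≤ t → t ≤ T → ∀ x, φ t s x = ψ t s x := by
  obtain ⟨δ₀, hδ₀, L, hL, hLa, hlip⟩ := hμ.exists_lipschitz_dyadicComp
  set δ₁ := min δ₀ (min δ δ')
  have hδ₁ : 0 < δ₁ := lt_min hδ₀ (lt_min hδ hδ')
  intro s t hs hst htT x
  refine hφ.eq_of_forall_shortInterval hψ hδ₁ (fun s t hst x => ?_) hs hst htT x
  exact hφ.eq_of_close_of_lipschitz_dyadicComp hψ
    (hφclose.mono (min_le_right _ _ |>.trans (min_le_left _ _)))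
    (hψclose.mono (min_le_right _ _ |>.trans (min_le_right _ _))) hL hLa
    (fun k s t h => hlip k s t (h.mono (min_le_left _ _))) hst x

/-- Uniqueness in the flow construction: two flows which are both at uniform
distance `O(|t-s|^a)` from a given `C¹`-approximate flow on small intervals coincide on the whole
of `{(s,t) : 0 ≤ s ≤ t ≤ T}`. -/
theorem flow_unique
    {T c₁ a : ℝ} (hT : 0 < T) (μ : ℝ → ℝ → U → U)
    (hμ : IsC1ApproxFlow T c₁ a μ)
    (φ ψ : ℝ → ℝ → U → U) (hφ : IsFlow T φ) (hψ : IsFlow T ψ)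
    (c δ : ℝ) (hδ : 0 < δ) (hφclose : Close T a c δ φ μ)
    (c' δ' : ℝ) (hδ' : 0 < δ') (hψclose : Close T a c' δ' ψ μ) :
    ∀ s t, 0 ≤ s → s ≤ t → t ≤ T → ∀ x, φ t s x = ψ t s x :=
  flow_unique_general μ hμ φ ψ hφ hψ c δ hδ hφclose c' δ' hδ' hψclose
end
end
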